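/- arXiv:math/9907203 — 2 statements merged into one kernel-verified Lean document; each statement's English description precedes it below -/
import Mathlib

section
/- Let k be a field of characteristic zero, X a finite type equipped with a fixed-point-free involution c : X → X, and Σ a subset of X such that Σ and c(Σ) are disjoint with union X. Fix a linear order on X, let V be the k-vector space with basis (e_x)_{x∈X}, and work in Λ(V), writing e_S for the ordered wedge product over a subset S ⊆ X. Set L_σ = e_σ ∧ e_{cσ} for σ ∈ Σ, L_K = ∏_{σ∈K} L_σ for K ⊆ Σ, and L = ∑_{σ∈Σ} L_σ. Then for all I ⊆ Σ, J ⊆ c(Σ) and every natural number m: L^m ∧ e_{I∪J} = m! · ∑_K L_K ∧ e_{I∪J}, where K runs over all subsets of Σ of cardinality m satisfying K ∩ I = ∅ and c(K) ∩ J = ∅. -/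
/-- The basis vector `e_x` of `V = X → k` inside the exterior algebra `Λ(V)`. -/
noncomputable def eVec (k : Type*) {X : Type*} [Field k] [DecidableEq X] (x : X) :
    ExteriorAlgebra k (X → k) :=
  ExteriorAlgebra.ι k (Pi.single x 1)

/-- The ordered wedge product `e_S = ⋀_{x ∈ S} e_x` over a finite subset `S ⊆ X`,
taken in the fixed linear order on `X`. -/
noncomputable def eWedge (k : Type*) {X : Type*} [Field k] [LinearOrder X] (S : Finset X) :
    ExteriorAlgebra k (X → k) :=
  ((S.sort (· ≤ ·)).map (eVec k)).prod

/-- The isotypic component `L_σ = e_σ ∧ e_{cσ}` of the Lefschetz class. -/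
noncomputable def Lsigma (k : Type*) {X : Type*} [Field k] [DecidableEq X] (c : X → X) (σ : X) :
    ExteriorAlgebra k (X → k) :=
  eVec k σ * eVec k (c σ)

/-- The product `L_K = ∏_{σ ∈ K} L_σ` (the factors `L_σ` have even degree, hence commute,
so the ordered product represents the product). -/
noncomputable def LK (k : Type*) {X : Type*} [Field k] [LinearOrder X] (c : X → X)
    (K : Finset X) : ExteriorAlgebra k (X → k) :=
  ((K.sort (· ≤ ·)).map (Lsigma k c)).prod

/-- The Lefschetz class `L = ∑_{σ ∈ Σ} L_σ = ∑_{σ ∈ Σ} e_σ ∧ e_{cσ}`. -/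
noncomputable def Lef (k : Type*) {X : Type*} [Field k] [DecidableEq X] (c : X → X)
    (S : Finset X) : ExteriorAlgebra k (X → k) :=
  ∑ σ ∈ S, Lsigma k c σ

/-! The classes `L_σ = e_σ ∧ e_{cσ}` have even degree, so they commute with each other, and
`L_σ ∧ L_σ = 0`. Hence in the expansion of `L^m = (∑ L_σ)^m` only products of distinct `L_σ`
survive, and each `L_K` with `|K| = m` appears once for each of the `m!` orderings of `K`.
Multiplying by `e_{I∪J}` then kills every `L_K` for which some `σ ∈ K` has `σ` or `cσ` in
`I ∪ J`, since a basis vector is repeated in the resulting wedge product. -/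

namespace ExteriorAlgebra

variable {R M : Type*} [CommRing R] [AddCommGroup M] [Module R M]

theorem list_prod_map_ι_eq_zero_of_not_nodup {l : List M} (hl : ¬ l.Nodup) :
    (l.map (ι R)).prod = 0 := by
  rw [← List.ofFn_get l, List.map_ofFn]
  exact ιMulti_eq_zero_of_not_inj (v := l.get)
    (List.nodup_iff_injective_get.not.mp (by simpa using hl))

theorem ι_mul_ι_eq_neg (x y : M) : ι R x * ι R y = -(ι R y * ι R x) :=
  eq_neg_of_add_eq_zero_left (ι_add_mul_swap x y)

theorem commute_ι_mul_ι_ι (a b x : M) : Commute (ι R a * ι R b) (ι R x) := by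
  rw [Commute, SemiconjBy, mul_assoc, ι_mul_ι_eq_neg b x, mul_neg, ← mul_assoc,
    ι_mul_ι_eq_neg a x, neg_mul, neg_neg, mul_assoc]

theorem commute_ι_mul_ι_ι_mul_ι (a b x y : M) :
    Commute (ι R a * ι R b) (ι R x * ι R y) :=
  (commute_ι_mul_ι_ι a b x).mul_right (commute_ι_mul_ι_ι a b y)

end ExteriorAlgebra

namespace Finset

variable {ι : Type*}

theorem prod_map_sort_insert {M : Type*} [Monoid M] [LinearOrder ι] {f : ι → M}
    (hf : ∀ i j, Commute (f i) (f j)) {s : Finset ι} {i : ι} (hi : i ∉ s) :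
    (((insert i s).sort (· ≤ ·)).map f).prod = f i * ((s.sort (· ≤ ·)).map f).prod := by
  have hperm : ((insert i s).sort (· ≤ ·)).Perm (i :: s.sort (· ≤ ·)) :=
    ((sort_perm_toList _ _).trans (toList_insert hi)).trans
      ((sort_perm_toList _ _).symm.cons i)
  rw [(hperm.map f).prod_eq' (List.pairwise_map.2 (List.Pairwise.imp (fun _ => hf _ _)
    (pairwise_sort _ _))), List.map_cons, List.prod_cons]

theorem mul_prod_map_sort_of_sq_eq_zero {R : Type*} [Semiring R] [LinearOrder ι] {f : ι → R}
    (hf : ∀ i j, Commute (f i) (f j)) (hsq : ∀ i, f i * f i = 0) (s : Finset ι) (i : ι) :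
    f i * ((s.sort (· ≤ ·)).map f).prod =
      if i ∉ s then (((insert i s).sort (· ≤ ·)).map f).prod else 0 := by
  split_ifs with hi
  · rw [← insert_erase hi, prod_map_sort_insert hf (notMem_erase i s), ← mul_assoc, hsq,
      zero_mul]
  · rw [prod_map_sort_insert hf hi]

theorem sum_sum_powersetCard_insert [DecidableEq ι] {A : Type*} [AddCommMonoid A]
    (s : Finset ι) (m : ℕ) (g : Finset ι → A) :
    ∑ i ∈ s, ∑ K ∈ s.powersetCard m with i ∉ K, g (insert i K) =
      (m + 1) • ∑ K ∈ s.powersetCard (m + 1), g K := by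
  have hinsert : ∀ i ∈ s, ∑ K ∈ s.powersetCard m with i ∉ K, g (insert i K) =
      ∑ K ∈ s.powersetCard (m + 1) with i ∈ K, g K := by
    intro i hi
    refine sum_nbij' (insert i) (·.erase i) ?_ ?_ ?_ ?_ (fun _ _ => rfl)
    · intro K hK
      simp only [mem_filter, mem_powersetCard] at hK ⊢
      exact ⟨⟨insert_subset hi hK.1.1, by rw [card_insert_of_notMem hK.2, hK.1.2]⟩,
        mem_insert_self i K⟩
    · intro K hK
      simp only [mem_filter, mem_powersetCard] at hK ⊢
      exact ⟨⟨(erase_subset i K).trans hK.1.1, by rw [card_erase_of_mem hK.2, hK.1.2]; rfl⟩,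
        notMem_erase i K⟩
    · intro K hK
      simp only [mem_filter] at hK
      exact erase_insert hK.2
    · intro K hK
      simp only [mem_filter] at hK
      exact insert_erase hK.2
  -- double counting: each `K` of size `m + 1` arises once for each of its `m + 1` elements
  rw [sum_congr rfl hinsert, sum_comm' (t' := s.powersetCard (m + 1)) (s' := id)]
  · rw [smul_sum]
    refine sum_congr rfl fun K hK => ?_
    rw [id, sum_const, (mem_powersetCard.mp hK).2]
  · intro i K
    simp only [mem_filter, mem_powersetCard, id]
    exact ⟨fun h => ⟨h.2.2, h.2.1⟩, fun h => ⟨h.2.1 h.1, h.2, h.1⟩⟩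

theorem sum_pow_eq_factorial_smul_sum_powersetCard {R : Type*} [Semiring R] [LinearOrder ι]
    {f : ι → R} (hf : ∀ i j, Commute (f i) (f j)) (hsq : ∀ i, f i * f i = 0)
    (s : Finset ι) (m : ℕ) :
    (∑ i ∈ s, f i) ^ m =
      m.factorial • ∑ K ∈ s.powersetCard m, ((K.sort (· ≤ ·)).map f).prod := by
  induction m with
  | zero => simp
  | succ m ih =>
    calc (∑ i ∈ s, f i) ^ (m + 1)
        = m.factorial • ∑ i ∈ s, ∑ K ∈ s.powersetCard m,
            f i * ((K.sort (· ≤ ·)).map f).prod := by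
          simp_rw [pow_succ', ih, sum_mul, mul_smul_comm, mul_sum, smul_sum]
      _ = m.factorial • ∑ i ∈ s, ∑ K ∈ s.powersetCard m with i ∉ K,
            (((insert i K).sort (· ≤ ·)).map f).prod := by
          simp_rw [mul_prod_map_sort_of_sq_eq_zero hf hsq, sum_filter]
      _ = (m + 1).factorial •
            ∑ K ∈ s.powersetCard (m + 1), ((K.sort (· ≤ ·)).map f).prod := by
          rw [sum_sum_powersetCard_insert s m fun K => ((K.sort (· ≤ ·)).map f).prod,
            smul_smul, Nat.factorial_succ, mul_comm]

end Finset

section CMType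

variable {k X : Type*} [Field k]

open ExteriorAlgebra

theorem prod_map_eVec_eq_zero_of_not_nodup [DecidableEq X] {l : List X} (hl : ¬ l.Nodup) :
    (l.map (eVec k)).prod = 0 := by
  have heVec : eVec k = ι k ∘ fun x : X => (Pi.single x 1 : X → k) := rfl
  rw [heVec, ← List.map_map]
  exact list_prod_map_ι_eq_zero_of_not_nodup fun h => hl h.of_map

theorem Lsigma_commute [DecidableEq X] (c : X → X) (σ τ : X) :
    Commute (Lsigma k c σ) (Lsigma k c τ) :=
  commute_ι_mul_ι_ι_mul_ι _ _ _ _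

theorem Lsigma_mul_self [DecidableEq X] (c : X → X) (σ : X) :
    Lsigma k c σ * Lsigma k c σ = 0 := by
  simpa [Lsigma, mul_assoc] using
    prod_map_eVec_eq_zero_of_not_nodup (k := k) (l := [σ, c σ, σ, c σ]) (by simp)

theorem Lef_pow [LinearOrder X] (c : X → X) (S : Finset X) (m : ℕ) :
    Lef k c S ^ m = m.factorial • ∑ K ∈ S.powersetCard m, LK k c K :=
  Finset.sum_pow_eq_factorial_smul_sum_powersetCard (Lsigma_commute c) (Lsigma_mul_self c) S m

theorem Lsigma_mul_eWedge_eq_zero [LinearOrder X] (c : X → X) {σ : X} {T : Finset X}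
    (h : σ ∈ T ∨ c σ ∈ T) : Lsigma k c σ * eWedge k T = 0 := by
  have hprod : Lsigma k c σ * eWedge k T =
      ((σ :: c σ :: T.sort (· ≤ ·)).map (eVec k)).prod := by
    simp [Lsigma, eWedge, mul_assoc]
  rw [hprod]
  exact prod_map_eVec_eq_zero_of_not_nodup (by rcases h with h | h <;> simp [h])

theorem LK_mul_eWedge_eq_zero [LinearOrder X] (c : X → X) {σ : X} {K T : Finset X}
    (hσ : σ ∈ K) (h : σ ∈ T ∨ c σ ∈ T) : LK k c K * eWedge k T = 0 := by
  have hcomm : Commute (Lsigma k c σ) (LK k c (K.erase σ)) :=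
    Commute.list_prod_right _ _ fun _ hx => by
      obtain ⟨τ, -, rfl⟩ := List.mem_map.mp hx
      exact Lsigma_commute c σ τ
  rw [LK, ← Finset.insert_erase hσ, Finset.prod_map_sort_insert (Lsigma_commute c)
    (Finset.notMem_erase σ K), ← LK, hcomm.eq, mul_assoc, Lsigma_mul_eWedge_eq_zero c h,
    mul_zero]

end CMType

theorem stmt4_general (k X : Type*) [Field k] [LinearOrder X]
    (c : X → X) (S : Finset X) (I J : Finset X) (m : ℕ) :
    Lef k c S ^ m * eWedge k (I ∪ J) =
      m.factorial •
        ∑ K ∈ (S.powersetCard m).filter (fun K => K ∩ I = ∅ ∧ K.image c ∩ J = ∅),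
          LK k c K * eWedge k (I ∪ J) := by
  rw [Lef_pow, smul_mul_assoc, Finset.sum_mul, Finset.sum_filter_of_ne]
  intro K _ hne
  contrapose! hne
  obtain ⟨σ, hσK, hσ⟩ : ∃ σ ∈ K, σ ∈ I ∪ J ∨ c σ ∈ I ∪ J := by
    simp only [← Finset.not_nonempty_iff_eq_empty, Finset.Nonempty, Finset.mem_inter,
      Finset.mem_image] at hne
    grind
  exact LK_mul_eWedge_eq_zero c hσK hσ

/-- Equation (2.3) of the paper, in the exterior-algebra model of the cohomology of a
`g`-dimensional abelian variety with CM type `Σ` (the finset `S`, with fixed-point-free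
involution `c`): for `I ⊆ Σ`, `J ⊆ cΣ` and every `m`,
`L^m ∧ e_{I∪J} = m! · ∑_K L_K ∧ e_{I∪J}`, the sum over all `K ⊆ Σ` with `|K| = m`,
`K ∩ I = ∅` and `c(K) ∩ J = ∅`. -/
theorem stmt4 (k X : Type*) [Field k] [CharZero k] [Fintype X] [LinearOrder X]
    (c : X → X) (hinv : Function.Involutive c) (hfree : ∀ x : X, c x ≠ x)
    (S : Finset X) (hdisj : Disjoint S (S.image c)) (hcover : S ∪ S.image c = Finset.univ)
    (I J : Finset X) (hI : I ⊆ S) (hJ : J ⊆ S.image c) (m : ℕ) :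
    Lef k c S ^ m * eWedge k (I ∪ J) =
      m.factorial •
        ∑ K ∈ (S.powersetCard m).filter (fun K => K ∩ I = ∅ ∧ K.image c ∩ J = ∅),
          LK k c K * eWedge k (I ∪ J) :=
  stmt4_general k X c S I J m
end

section
/- Let X be a type with a fixed-point-free involution c : X → X and Σ a subset of X with Σ ∩ c(Σ) = ∅. Let I, I', K, L be finite subsets of Σ and J, J' finite subsets of c(Σ), with K ∩ I = ∅, c(K) ∩ J = ∅, L ∩ I' = ∅, c(L) ∩ J' = ∅. Suppose I ∪ K = I' ∪ L and J ∪ c(K) = J' ∪ c(L). Then I \ c(J) = I' \ c(J') and J \ c(I) = J' \ c(I'). -/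
private lemma stmt9aux {X : Type*} [DecidableEq X] (c : X → X)
    (hinv : Function.Involutive c)
    (I I' K L J J' : Finset X)
    (hKI : K ∩ I = ∅) (hKJ : K.image c ∩ J = ∅)
    (h1 : I ∪ K = I' ∪ L) (h2 : J ∪ K.image c = J' ∪ L.image c) :
    I \ J.image c ⊆ I' \ J'.image c ∧ J \ I.image c ⊆ J' \ I'.image c := by
  have hmem : ∀ (S : Finset X) (x : X), x ∈ S.image c ↔ c x ∈ S := by
    intro S x
    constructor
    · rintro h
      rcases Finset.mem_image.mp h with ⟨a, ha, rfl⟩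
      simpa [hinv a] using ha
    · intro h
      exact Finset.mem_image.mpr ⟨c x, h, hinv x⟩
  have hKIdisj : ∀ x, x ∈ K → x ∈ I → False := by
    intro x ha hb
    have : x ∈ K ∩ I := Finset.mem_inter.mpr ⟨ha, hb⟩
    simp [hKI] at this
  have hKJdisj : ∀ x, x ∈ K.image c → x ∈ J → False := by
    intro x ha hb
    have : x ∈ K.image c ∩ J := Finset.mem_inter.mpr ⟨ha, hb⟩
    simp [hKJ] at this
  constructor
  · intro x hx
    rcases Finset.mem_sdiff.mp hx with ⟨hxI, hxJ⟩
    refine Finset.mem_sdiff.mpr ⟨?_, ?_⟩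
    · have hx1 : x ∈ I' ∪ L := h1 ▸ Finset.mem_union_left _ hxI
      rcases Finset.mem_union.mp hx1 with h | hxL
      · exact h
      · exfalso
        have : c x ∈ J ∪ K.image c := by
          rw [h2]
          exact Finset.mem_union_right _ ((hmem L (c x)).mpr (by rwa [hinv x]))
        rcases Finset.mem_union.mp this with h | h
        · exact hxJ ((hmem J x).mpr h)
        · have hxK : x ∈ K := by
            have := (hmem K (c x)).mp h
            rwa [hinv x] at this
          exact hKIdisj x hxK hxI
    · intro hc
      have hcxJ' : c x ∈ J' := (hmem J' x).mp hc
      have : c x ∈ J ∪ K.image c := h2 ▸ Finset.mem_union_left _ hcxJ'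
      rcases Finset.mem_union.mp this with h | h
      · exact hxJ ((hmem J x).mpr h)
      · have hxK : x ∈ K := by
          have := (hmem K (c x)).mp h
          rwa [hinv x] at this
        exact hKIdisj x hxK hxI
  · intro x hx
    rcases Finset.mem_sdiff.mp hx with ⟨hxJ, hxI⟩
    refine Finset.mem_sdiff.mpr ⟨?_, ?_⟩
    · have hx1 : x ∈ J' ∪ L.image c := h2 ▸ Finset.mem_union_left _ hxJ
      rcases Finset.mem_union.mp hx1 with h | hxcL
      · exact h
      · exfalso
        have hcxL : c x ∈ L := (hmem L x).mp hxcL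
        have : c x ∈ I ∪ K := h1 ▸ Finset.mem_union_right _ hcxL
        rcases Finset.mem_union.mp this with h | h
        · exact hxI ((hmem I x).mpr h)
        · exact hKJdisj x ((hmem K x).mpr h) hxJ
    · intro hc
      have hcxI' : c x ∈ I' := (hmem I' x).mp hc
      have : c x ∈ I ∪ K := h1 ▸ Finset.mem_union_left _ hcxI'
      rcases Finset.mem_union.mp this with h | h
      · exact hxI ((hmem I x).mpr h)
      · exact hKJdisj x ((hmem K x).mpr h) hxJ

/-- Combinatorics of CM types from Lemma 2.4 of the paper (equations (2.4), (2.5)): if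
`I ⊔ K = I' ⊔ L` and `J ⊔ cK = J' ⊔ cL` (with `I, I', K, L ⊆ Σ`, `J, J' ⊆ cΣ`, and the
indicated disjointness), then the types `(I, J)` and `(I', J')` have the same reduced type
`(I \ c(J), J \ c(I)) = (I' \ c(J'), J' \ c(I'))`. -/
theorem stmt9 {X : Type*} [DecidableEq X] (c : X → X) (hinv : Function.Involutive c)
    (hfree : ∀ x : X, c x ≠ x) (Sig : Set X) (hdisj : Sig ∩ (c '' Sig) = ∅)
    (I I' K L J J' : Finset X)
    (hI : ↑I ⊆ Sig) (hI' : ↑I' ⊆ Sig) (hK : ↑K ⊆ Sig) (hL : ↑L ⊆ Sig)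
    (hJ : ↑J ⊆ c '' Sig) (hJ' : ↑J' ⊆ c '' Sig)
    (hKI : K ∩ I = ∅) (hKJ : K.image c ∩ J = ∅)
    (hLI : L ∩ I' = ∅) (hLJ : L.image c ∩ J' = ∅)
    (h1 : I ∪ K = I' ∪ L) (h2 : J ∪ K.image c = J' ∪ L.image c) :
    I \ J.image c = I' \ J'.image c ∧ J \ I.image c = J' \ I'.image c := by
  obtain ⟨a1, a2⟩ := stmt9aux c hinv I I' K L J J' hKI hKJ h1 h2
  obtain ⟨b1, b2⟩ := stmt9aux c hinv I' I L K J' J hLI hLJ h1.symm h2.symm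
  exact ⟨Finset.Subset.antisymm a1 b1, Finset.Subset.antisymm a2 b2⟩
end
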